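/- Let 2/3 < γ < 2. Along any type VIII solution of the tilted Bianchi type VIII dynamical system with Ω(τ) > 0 for all τ, one has q > 0 everywhere, and consequently the function Z₂ = N₁²·(N̄² − |N×|²)² is strictly increasing (Z₂' = 6qZ₂ > 0). -/

import Mathlib

noncomputable section

open Complex Filter

/-- State of the tilted Bianchi type VIII dynamical system (F-gauge):
real variables `Sp`, `Nb` (= N̄), `N1`, `Om`, `v1` and complex variables
`Sx` (= Σ×), `S1`, `Nx` (= N×), `v`, all functions of the dynamical time τ. -/
structure BianchiVIII (γ : ℝ) (I : Set ℝ) where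
  Sp : ℝ → ℝ
  Sx : ℝ → ℂ
  S1 : ℝ → ℂ
  Nx : ℝ → ℂ
  Nb : ℝ → ℝ
  N1 : ℝ → ℝ
  Om : ℝ → ℝ
  v1 : ℝ → ℝ
  v : ℝ → ℂ

namespace BianchiVIII

variable {γ : ℝ} {I : Set ℝ}

/-- Σ² = Σ₊² + |Σ×|² + |Σ₁|² -/
def Sig2 (S : BianchiVIII γ I) (τ : ℝ) : ℝ :=
  S.Sp τ ^ 2 + ‖S.Sx τ‖ ^ 2 + ‖S.S1 τ‖ ^ 2

/-- V² = v₁² + |v|² -/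
def V2 (S : BianchiVIII γ I) (τ : ℝ) : ℝ :=
  S.v1 τ ^ 2 + ‖S.v τ‖ ^ 2

/-- The tilt speed V = √(V²). -/
def V (S : BianchiVIII γ I) (τ : ℝ) : ℝ := Real.sqrt (S.V2 τ)

/-- G₊ = 1 + (γ−1)V² -/
def Gp (S : BianchiVIII γ I) (τ : ℝ) : ℝ := 1 + (γ - 1) * S.V2 τ

/-- Deceleration parameter q = 2Σ² + (1/2)((3γ−2)+(2−γ)V²)Om/G₊ -/
def q (S : BianchiVIII γ I) (τ : ℝ) : ℝ :=
  2 * S.Sig2 τ + (1/2) * ((3*γ - 2) + (2 - γ) * S.V2 τ) * S.Om τ / S.Gp τ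

/-- W = V²𝒮 = Σ₊(−2v₁² + |v|²) + 2√3 v₁ Re(conj(Σ₁) v) + √3 Re(Σ× conj(v)²) -/
def W (S : BianchiVIII γ I) (τ : ℝ) : ℝ :=
  S.Sp τ * (-2 * S.v1 τ ^ 2 + ‖S.v τ‖ ^ 2)
    + 2 * Real.sqrt 3 * S.v1 τ * ((starRingEnd ℂ) (S.S1 τ) * S.v τ).re
    + Real.sqrt 3 * (S.Sx τ * ((starRingEnd ℂ) (S.v τ)) ^ 2).re

/-- T = ((3γ−4)(1−V²) + (2−γ)W)/(1−(γ−1)V²) -/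
def T (S : BianchiVIII γ I) (τ : ℝ) : ℝ :=
  ((3*γ - 4) * (1 - S.V2 τ) + (2 - γ) * S.W τ) / (1 - (γ - 1) * S.V2 τ)

/-- a = (N̄²−N₁²−|N×|²)/((N̄−N₁)²−|N×|²) -/
def a (S : BianchiVIII γ I) (τ : ℝ) : ℝ :=
  (S.Nb τ ^ 2 - S.N1 τ ^ 2 - ‖S.Nx τ‖ ^ 2) /
    ((S.Nb τ - S.N1 τ) ^ 2 - ‖S.Nx τ‖ ^ 2)

/-- b = −2N₁N×/((N̄−N₁)²−|N×|²) -/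
def b (S : BianchiVIII γ I) (τ : ℝ) : ℂ :=
  ((-2 * S.N1 τ : ℝ) : ℂ) * S.Nx τ /
    (((S.Nb τ - S.N1 τ) ^ 2 - ‖S.Nx τ‖ ^ 2 : ℝ) : ℂ)

/-- R = aΣ₁ + b·conj(Σ₁) -/
def R (S : BianchiVIII γ I) (τ : ℝ) : ℂ :=
  (S.a τ : ℂ) * S.S1 τ + S.b τ * (starRingEnd ℂ) (S.S1 τ)

/-- The evolution equations and the constraints of the tilted Bianchi
type VIII dynamical system, holding at each τ in the interval `I`. -/
structure IsSolution (S : BianchiVIII γ I) : Prop where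
  hSp : ∀ τ ∈ I, HasDerivAt S.Sp
    ((S.q τ - 2) * S.Sp τ + 3 * ((starRingEnd ℂ) (S.R τ) * S.S1 τ).re
      - S.N1 τ * S.Nb τ - 2 * ‖S.Nx τ‖ ^ 2
      + γ * S.Om τ / (2 * S.Gp τ) * (-2 * S.v1 τ ^ 2 + ‖S.v τ‖ ^ 2)) τ
  hSx : ∀ τ ∈ I, HasDerivAt S.Sx
    (((S.q τ - 2 : ℝ) : ℂ) * S.Sx τ + (Real.sqrt 3 : ℂ) * S.S1 τ * S.R τ
      - (Real.sqrt 3 : ℂ) * S.Nx τ * ((2 * S.Nb τ - S.N1 τ : ℝ) : ℂ)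
      + ((Real.sqrt 3 * γ * S.Om τ / (2 * S.Gp τ) : ℝ) : ℂ) * (S.v τ) ^ 2) τ
  hS1 : ∀ τ ∈ I, HasDerivAt S.S1
    (((S.q τ - 2 : ℝ) : ℂ) * S.S1 τ - ((3 * S.Sp τ : ℝ) : ℂ) * S.R τ
      - (Real.sqrt 3 : ℂ) * S.Sx τ * (starRingEnd ℂ) (S.R τ)
      + ((Real.sqrt 3 * γ * S.Om τ * S.v1 τ / S.Gp τ : ℝ) : ℂ) * S.v τ) τ
  hNx : ∀ τ ∈ I, HasDerivAt S.Nx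
    (((S.q τ + 2 * S.Sp τ : ℝ) : ℂ) * S.Nx τ
      + ((2 * Real.sqrt 3 : ℝ) : ℂ) * S.Sx τ * ((S.Nb τ : ℝ) : ℂ)) τ
  hNb : ∀ τ ∈ I, HasDerivAt S.Nb
    ((S.q τ + 2 * S.Sp τ) * S.Nb τ
      + 2 * Real.sqrt 3 * ((starRingEnd ℂ) (S.Sx τ) * S.Nx τ).re) τ
  hN1 : ∀ τ ∈ I, HasDerivAt S.N1 ((S.q τ - 4 * S.Sp τ) * S.N1 τ) τ
  hOm : ∀ τ ∈ I, HasDerivAt S.Om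
    (S.Om τ / S.Gp τ * (2 * S.q τ - (3*γ - 2)
      + (2 * S.q τ * (γ - 1) - (2 - γ)) * S.V2 τ - γ * S.W τ)) τ
  hv1 : ∀ τ ∈ I, HasDerivAt S.v1
    ((S.T τ + 2 * S.Sp τ) * S.v1 τ
      - Real.sqrt 3 * ((S.R τ + S.S1 τ) * (starRingEnd ℂ) (S.v τ)).re
      + Real.sqrt 3 * ((starRingEnd ℂ) (S.Nx τ) * (S.v τ) ^ 2).im) τ
  hv : ∀ τ ∈ I, HasDerivAt S.v
    ((((S.T τ - S.Sp τ : ℝ) : ℂ)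
        - Complex.I * (Real.sqrt 3 : ℂ) * ((S.Nb τ - S.N1 τ : ℝ) : ℂ) * (S.v1 τ : ℂ)) * S.v τ
      - (Real.sqrt 3 : ℂ) * (S.Sx τ + Complex.I * S.Nx τ * (S.v1 τ : ℂ)) * (starRingEnd ℂ) (S.v τ)
      - (Real.sqrt 3 : ℂ) * (S.S1 τ - S.R τ) * (S.v1 τ : ℂ)) τ
  hC1 : ∀ τ ∈ I, 1 = S.Sig2 τ + (1/4) * S.N1 τ ^ 2 - S.N1 τ * S.Nb τ
      + ‖S.Nx τ‖ ^ 2 + S.Om τ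
  hC2 : ∀ τ ∈ I, 0 = 2 * ((starRingEnd ℂ) (S.Sx τ) * S.Nx τ).im
      + γ * S.Om τ * S.v1 τ / S.Gp τ
  hC3 : ∀ τ ∈ I, (0 : ℂ) = Complex.I * S.S1 τ * ((S.Nb τ - S.N1 τ : ℝ) : ℂ)
      + Complex.I * (starRingEnd ℂ) (S.S1 τ) * S.Nx τ
      + ((γ * S.Om τ / S.Gp τ : ℝ) : ℂ) * S.v τ

/-- Type VIII conditions: N₁ < 0, N̄ > 0, N̄² − |N×|² > 0, Om ≥ 0, V² < 1. -/
def IsTypeVIII (S : BianchiVIII γ I) : Prop :=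
  ∀ τ ∈ I, S.N1 τ < 0 ∧ 0 < S.Nb τ ∧ 0 < S.Nb τ ^ 2 - ‖S.Nx τ‖ ^ 2
    ∧ 0 ≤ S.Om τ ∧ S.V2 τ < 1

/-- D = N₁v₁² + N̄|v|² + Re(conj(N×) v²) -/
def D (S : BianchiVIII γ I) (τ : ℝ) : ℝ :=
  S.N1 τ * S.v1 τ ^ 2 + S.Nb τ * ‖S.v τ‖ ^ 2
    + ((starRingEnd ℂ) (S.Nx τ) * (S.v τ) ^ 2).re

end BianchiVIII

/-- Z₂ = N₁²·(N̄² − |N×|²)². -/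
noncomputable def Z2 {γ : ℝ} {I : Set ℝ} (S : BianchiVIII γ I) (τ : ℝ) : ℝ :=
  S.N1 τ ^ 2 * (S.Nb τ ^ 2 - ‖S.Nx τ‖ ^ 2) ^ 2

/-!
Writing the matter coefficients as `(3γ−2) + (2−γ)V² = (3γ−2)(1−V²) + 2γV²` and
`G₊ = (1−V²) + γV²` shows that both are positive once `γ > 2/3` and `V² < 1`, so `q > 0`
whenever `Ω > 0`. The evolution equations make `N₁` and `N̄² − |N×|²` grow at the rates
`q − 4Σ₊` and `2(q + 2Σ₊)`; the `Σ₊` terms cancel in `Z₂ = N₁²(N̄² − |N×|²)²`, leaving `Z₂' = 6qZ₂`.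
-/

namespace BianchiVIII

variable {γ : ℝ} {I : Set ℝ} (S : BianchiVIII γ I) {τ : ℝ}

theorem Sig2_nonneg : 0 ≤ S.Sig2 τ := by
  unfold Sig2; positivity

theorem V2_nonneg : 0 ≤ S.V2 τ := by
  unfold V2; positivity

variable {S}

theorem Gp_pos (hγ : 0 < γ) (hV : S.V2 τ < 1) : 0 < S.Gp τ := by
  have hGp : S.Gp τ = (1 - S.V2 τ) + γ * S.V2 τ := by unfold Gp; ring
  have := S.V2_nonneg (τ := τ)
  rw [hGp]; nlinarith

theorem q_pos (hγ : 2/3 < γ) (hV : S.V2 τ < 1) (hOm : 0 < S.Om τ) : 0 < S.q τ := by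
  have hV0 := S.V2_nonneg (τ := τ)
  have hcoef : 0 < (3*γ - 2) + (2 - γ) * S.V2 τ := by
    have : (3*γ - 2) + (2 - γ) * S.V2 τ = (3*γ - 2) * (1 - S.V2 τ) + 2 * γ * S.V2 τ := by ring
    rw [this]; nlinarith
  have hGp := Gp_pos (by linarith) hV
  have := S.Sig2_nonneg (τ := τ)
  unfold q; positivity

theorem IsSolution.hasDerivAt_N1_sq (hsol : S.IsSolution) (hτ : τ ∈ I) :
    HasDerivAt (fun t => S.N1 t ^ 2) (2 * (S.q τ - 4 * S.Sp τ) * S.N1 τ ^ 2) τ :=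
  ((hsol.hN1 τ hτ).fun_pow 2).congr_deriv (by push_cast; ring)

theorem IsSolution.hasDerivAt_Nb_sq_sub_norm_Nx_sq (hsol : S.IsSolution) (hτ : τ ∈ I) :
    HasDerivAt (fun t => S.Nb t ^ 2 - ‖S.Nx t‖ ^ 2)
      (2 * (S.q τ + 2 * S.Sp τ) * (S.Nb τ ^ 2 - ‖S.Nx τ‖ ^ 2)) τ := by
  refine (((hsol.hNb τ hτ).fun_pow 2).fun_sub (hsol.hNx τ hτ).norm_sq).congr_deriv ?_
  simp only [Complex.inner, Complex.mul_re, Complex.add_re, Complex.add_im, Complex.mul_im,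
    Complex.ofReal_re, Complex.ofReal_im, Complex.conj_re, Complex.conj_im,
    Complex.sq_norm, Complex.normSq_apply]
  push_cast
  ring

theorem IsSolution.hasDerivAt_Z2 (hsol : S.IsSolution) (hτ : τ ∈ I) :
    HasDerivAt (Z2 S) (6 * S.q τ * Z2 S τ) τ :=
  ((hsol.hasDerivAt_N1_sq hτ).fun_mul
    ((hsol.hasDerivAt_Nb_sq_sub_norm_Nx_sq hτ).fun_pow 2)).congr_deriv (by unfold Z2; push_cast; ring)

theorem Z2_pos (hN1 : S.N1 τ ≠ 0) (hN : 0 < S.Nb τ ^ 2 - ‖S.Nx τ‖ ^ 2) : 0 < Z2 S τ := by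
  unfold Z2; positivity

end BianchiVIII

theorem bianchiVIII_Z2_strictMono_general (γ : ℝ) (hγ1 : 2/3 < γ)
    (τ₀ : ℝ) (S : BianchiVIII γ (Set.Ici τ₀))
    (hsol : S.IsSolution) (hVIII : S.IsTypeVIII)
    (hOm : ∀ τ ∈ Set.Ici τ₀, 0 < S.Om τ) :
    (∀ τ ∈ Set.Ici τ₀, 0 < S.q τ) ∧
    (∀ τ ∈ Set.Ici τ₀, 0 < 6 * S.q τ * Z2 S τ) ∧
    StrictMonoOn (Z2 S) (Set.Ici τ₀) := by
  have hq : ∀ τ ∈ Set.Ici τ₀, 0 < S.q τ := fun τ hτ => by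
    obtain ⟨-, -, -, -, hV⟩ := hVIII τ hτ
    exact BianchiVIII.q_pos hγ1 hV (hOm τ hτ)
  have hZ' : ∀ τ ∈ Set.Ici τ₀, 0 < 6 * S.q τ * Z2 S τ := fun τ hτ => by
    obtain ⟨hN1, -, hN, -, -⟩ := hVIII τ hτ
    have := BianchiVIII.Z2_pos hN1.ne hN
    have := hq τ hτ
    positivity
  refine ⟨hq, hZ', strictMonoOn_of_deriv_pos (convex_Ici τ₀)
    (fun τ hτ => (hsol.hasDerivAt_Z2 hτ).continuousAt.continuousWithinAt) fun τ hτ => ?_⟩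
  rw [(hsol.hasDerivAt_Z2 (interior_subset hτ)).deriv]
  exact hZ' τ (interior_subset hτ)

/-- For 2/3 < γ < 2, along any type VIII solution with Ω > 0,
one has q > 0 everywhere, Z₂' = 6qZ₂ > 0, and Z₂ is strictly increasing. -/
theorem bianchiVIII_Z2_strictMono (γ : ℝ) (hγ1 : 2/3 < γ) (hγ2 : γ < 2)
    (τ₀ : ℝ) (S : BianchiVIII γ (Set.Ici τ₀))
    (hsol : S.IsSolution) (hVIII : S.IsTypeVIII)
    (hOm : ∀ τ ∈ Set.Ici τ₀, 0 < S.Om τ) :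
    (∀ τ ∈ Set.Ici τ₀, 0 < S.q τ) ∧
    (∀ τ ∈ Set.Ici τ₀, 0 < 6 * S.q τ * Z2 S τ) ∧
    StrictMonoOn (Z2 S) (Set.Ici τ₀) :=
  bianchiVIII_Z2_strictMono_general γ hγ1 τ₀ S hsol hVIII hOm
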